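/- arXiv:2006.14431 — 2 statements merged into one kernel-verified Lean document; each statement's English description precedes it below -/
import Mathlib

section
/- For every solution (X₁, X₂) ∈ ℂ² with X₁ ≠ 0 and X₂ ≠ 0 of the equation X₁⁴ - 3X₁³X₂ + 4X₁²X₂² - 2X₁X₂³ + X₂⁴ = 0, the quotient X₁/X₂ is not a real number. -/
/-- For every solution `(X₁, X₂) ∈ ℂ²` with `X₁ ≠ 0` and `X₂ ≠ 0` of
`X₁⁴ - 3X₁³X₂ + 4X₁²X₂² - 2X₁X₂³ + X₂⁴ = 0`, the quotient `X₁/X₂` is not real. -/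
theorem stmt_0 (X₁ X₂ : ℂ) (h₁ : X₁ ≠ 0) (h₂ : X₂ ≠ 0)
    (h : X₁^4 - 3*X₁^3*X₂ + 4*X₁^2*X₂^2 - 2*X₁*X₂^3 + X₂^4 = 0) :
    ¬ ∃ r : ℝ, X₁ / X₂ = (r : ℂ) := by
  rintro ⟨r, hr⟩
  have hx : X₁ = (r : ℂ) * X₂ := by
    field_simp at hr
    linear_combination hr
  subst hx
  have h4 : (X₂ : ℂ)^4 ≠ 0 := pow_ne_zero _ h₂
  have hp : ((r : ℂ)^4 - 3*(r:ℂ)^3 + 4*(r:ℂ)^2 - 2*(r:ℂ) + 1) * X₂^4 = 0 := by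
    linear_combination h
  have hpc : (r : ℂ)^4 - 3*(r:ℂ)^3 + 4*(r:ℂ)^2 - 2*(r:ℂ) + 1 = 0 :=
    (mul_eq_zero.mp hp).resolve_right h4
  have hpr : r^4 - 3*r^3 + 4*r^2 - 2*r + 1 = 0 := by
    exact_mod_cast hpc
  nlinarith [sq_nonneg (r^2 - (3/2)*r), sq_nonneg (r - 1), sq_nonneg r, sq_nonneg (r^2 - r), sq_nonneg (r^2 - 1)]
end

section
/- The fields ℚ[X]/(X³ - X + 1) and ℚ[X]/(X³ - 3X + 25) are isomorphic as fields. -/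
/-!
If `α` is a root of `X³ - X + 1`, then `β = 2 - 3α²` is a root of `X³ - 3X + 25`, and conversely
`α = (2 + β - β²) / 9`. These two substitutions induce mutually inverse `ℚ`-algebra maps between the
quotient rings.
-/

open Polynomial

namespace AdjoinRoot

variable {R : Type*} [CommRing R] {p q : R[X]}

theorem aeval_mk (f g : R[X]) : aeval (mk p f) g = mk p (g.comp f) := by
  rw [← aeval_eq, ← aeval_eq, aeval_comp]

noncomputable def algHomOfDvdComp (f : R[X]) (h : q ∣ p.comp f) :
    AdjoinRoot p →ₐ[R] AdjoinRoot q :=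
  liftAlgHom p (Algebra.ofId R _) (mk q f) <| by
    change aeval (mk q f) p = 0
    rw [aeval_mk, mk_eq_zero]
    exact h

theorem algHomOfDvdComp_mk (f g : R[X]) (h : q ∣ p.comp f) :
    algHomOfDvdComp f h (mk p g) = mk q (g.comp f) := by
  rw [algHomOfDvdComp, liftAlgHom_mk]
  exact aeval_mk f g

noncomputable def algEquivOfDvdComp (f g : R[X]) (hf : q ∣ p.comp f) (hg : p ∣ q.comp g)
    (hfg : p ∣ f.comp g - X) (hgf : q ∣ g.comp f - X) : AdjoinRoot p ≃ₐ[R] AdjoinRoot q :=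
  AlgEquiv.ofAlgHom (algHomOfDvdComp f hf) (algHomOfDvdComp g hg)
    (algHom_ext <| by
      simp only [AlgHom.comp_apply, AlgHom.id_apply, ← mk_X, algHomOfDvdComp_mk, X_comp]
      exact mk_eq_mk.2 hgf)
    (algHom_ext <| by
      simp only [AlgHom.comp_apply, AlgHom.id_apply, ← mk_X, algHomOfDvdComp_mk, X_comp]
      exact mk_eq_mk.2 hfg)

end AdjoinRoot

/-- The fields `ℚ[X]/(X³ - X + 1)` and `ℚ[X]/(X³ - 3X + 25)` are isomorphic. -/
theorem stmt_6 :
    Nonempty (AdjoinRoot (X^3 - X + 1 : ℚ[X]) ≃+* AdjoinRoot (X^3 - 3*X + 25 : ℚ[X])) := by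
  refine ⟨(AdjoinRoot.algEquivOfDvdComp (C (1/9) * (-X^2 + X + 2)) (-3 * X^2 + 2)
    ⟨C (1/729) * (23 + 3 * X^2 - X^3), ?_⟩ ⟨27 + 27 * X - 27 * X^3, ?_⟩
    ⟨-X, ?_⟩ ⟨C (1/27) * (2 - X), ?_⟩).toRingEquiv⟩
  -- `ring` cannot invert `C 9` in `ℚ[X]`, so each identity is checked pointwise in `ℚ`.
  all_goals
    refine Polynomial.funext fun x => ?_
    simp only [eval_comp, eval_add, eval_sub, eval_mul, eval_pow, eval_neg, eval_X, eval_C,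
      eval_ofNat, eval_one]
    ring
end
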